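/- The Generalized Superfast Encoding operators satisfy, for any choice of local Majorana modes obeying the Majorana relations and any antisymmetric orientation: B̃_j† = B̃_j, Ã_{jk}† = Ã_{jk}, B̃_j² = I, Ã_{jk}² = I, B̃_j B̃_k = B̃_k B̃_j, Ã_{jk} = −Ã_{kj}, Ã_{jk} B̃_l = (−1)^{δ_{jl}+δ_{kl}} B̃_l Ã_{jk}, and Ã_{jk} Ã_{lq} = (−1)^{δ_{jl}+δ_{jq}+δ_{kl}+δ_{kq}} Ã_{lq} Ã_{jk} for distinct edges (j,k), (l,q). -/
import Mathlib


open Matrix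

/-- Labels for single-qubit Pauli matrices. -/
inductive P1 : Type
  | I : P1
  | X : P1
  | Y : P1
  | Z : P1
deriving DecidableEq

/-- The matrix entries of a single-qubit Pauli matrix, with the qubit basis indexed by
`Bool` (`false = |0⟩`, `true = |1⟩`). -/
def P1.entry : P1 → Bool → Bool → ℂ
  | P1.I, a, b => if a = b then 1 else 0
  | P1.X, a, b => if a = b then 0 else 1
  | P1.Y, a, b => if a = b then 0 else if a then Complex.I else -Complex.I
  | P1.Z, a, b => if a = b then (if a then -1 else 1) else 0

/-- The multi-qubit Pauli matrix `⨂_{q ∈ Q} P_{f q}` on the qubits indexed by `Q`,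
acting on `(ℂ²)^{⊗Q}` (whose standard basis is indexed by `Q → Bool`). -/
noncomputable def PauliMatrix {Q : Type*} [Fintype Q] (f : Q → P1) :
    Matrix (Q → Bool) (Q → Bool) ℂ :=
  Matrix.of fun a b => ∏ q, (f q).entry (a q) (b q)

/-- The weight of a Pauli operator: the number of qubits on which it acts nontrivially. -/
noncomputable def pweight {Q : Type*} [Fintype Q] (f : Q → P1) : ℕ :=
  (Finset.univ.filter fun q => f q ≠ P1.I).card

section GSE

variable {V : Type*} [Fintype V] [DecidableEq V] (G : SimpleGraph V) [DecidableRel G.Adj]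

/-- The qubits of the Generalized Superfast Encoding: `d(i)/2` qubits at each vertex `i`. -/
abbrev GSEQubit : Type _ := Σ i : V, Fin (G.degree i / 2)

/-- The GSE vertex operator `B̃_j = (-i)^{d(j)/2} γ_{j,1} γ_{j,2} ⋯ γ_{j,d(j)}`. -/
noncomputable def BtGSE (γ : V → ℕ → Matrix (GSEQubit G → Bool) (GSEQubit G → Bool) ℂ)
    (j : V) : Matrix (GSEQubit G → Bool) (GSEQubit G → Bool) ℂ :=
  ((-Complex.I) ^ (G.degree j / 2)) • (((List.range (G.degree j)).map (γ j)).prod)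

/-- The GSE edge operator `Ã_{jk} = ε_{jk} γ_{j,p} γ_{k,q}`, where `k = N(j,p)` and
`j = N(k,q)`; `pos j k` denotes the label `p` with `N(j, p) = k`. -/
noncomputable def AtGSE (γ : V → ℕ → Matrix (GSEQubit G → Bool) (GSEQubit G → Bool) ℂ)
    (pos : V → V → ℕ) (eps : V → V → ℂ) (j k : V) :
    Matrix (GSEQubit G → Bool) (GSEQubit G → Bool) ℂ :=
  eps j k • (γ j (pos j k) * γ k (pos k j))

end GSE


section Helpers
variable {n : Type*} [Fintype n] [DecidableEq n]

lemma gseListProdComm (X : Matrix n n ℂ) (g : ℕ → Matrix n n ℂ) (s : ℕ → ℂ) :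
    ∀ d : ℕ, (∀ r < d, X * g r = s r • (g r * X)) →
    X * ((List.range d).map g).prod =
      (∏ r ∈ Finset.range d, s r) • (((List.range d).map g).prod * X) := by
  intro d
  induction d with
  | zero => intro _; simp
  | succ d ih =>
    intro h
    have hP := ih (fun r hr => h r (hr.trans (Nat.lt_succ_self d)))
    rw [List.range_succ, List.map_append, List.prod_append, List.map_singleton,
      List.prod_singleton, Finset.prod_range_succ, ← mul_assoc, hP, smul_mul_assoc,
      mul_assoc, h d (Nat.lt_succ_self d), mul_smul_comm, smul_smul, ← mul_assoc]

lemma gseListProdReverse (g : ℕ → Matrix n n ℂ) :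
    ∀ d : ℕ, (∀ p q, p < d → q < d → p ≠ q → g p * g q = -(g q * g p)) →
    (((List.range d).map g).reverse).prod =
      ((-1 : ℂ) ^ d.choose 2) • ((List.range d).map g).prod := by
  intro d
  induction d with
  | zero => intro _; simp
  | succ d ih =>
    intro h
    have hP := ih (fun p q hp hq hpq =>
      h p q (hp.trans (Nat.lt_succ_self d)) (hq.trans (Nat.lt_succ_self d)) hpq)
    have hcomm := gseListProdComm (g d) g (fun _ => (-1 : ℂ)) d (fun r hr => by
      rw [h d r (Nat.lt_succ_self d) (hr.trans (Nat.lt_succ_self d)) (Nat.ne_of_gt hr)]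
      simp)
    rw [List.range_succ, List.map_append, List.map_singleton, List.reverse_append]
    simp only [List.reverse_singleton, List.singleton_append, List.prod_cons]
    rw [hP, mul_smul_comm, hcomm, Finset.prod_const, Finset.card_range, smul_smul,
      List.prod_append, List.prod_singleton]
    congr 1
    rw [← pow_add]
    congr 1
    rw [Nat.choose_succ_succ, Nat.choose_one_right, Nat.add_comm]

lemma gseListProdSq (g : ℕ → Matrix n n ℂ) :
    ∀ d : ℕ, (∀ p q, p < d → q < d → p ≠ q → g p * g q = -(g q * g p)) →
      (∀ p, p < d → g p * g p = 1) →
    ((List.range d).map g).prod * ((List.range d).map g).prod =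
      ((-1 : ℂ) ^ d.choose 2) • 1 := by
  intro d
  induction d with
  | zero => intro _ _; simp
  | succ d ih =>
    intro h hsq
    have hP := ih (fun p q hp hq hpq =>
      h p q (hp.trans (Nat.lt_succ_self d)) (hq.trans (Nat.lt_succ_self d)) hpq)
      (fun p hp => hsq p (hp.trans (Nat.lt_succ_self d)))
    have hcomm := gseListProdComm (g d) g (fun _ => (-1 : ℂ)) d (fun r hr => by
      rw [h d r (Nat.lt_succ_self d) (hr.trans (Nat.lt_succ_self d)) (Nat.ne_of_gt hr)]
      simp)
    rw [List.range_succ, List.map_append, List.prod_append, List.map_singleton,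
      List.prod_singleton]
    calc (((List.range d).map g).prod * g d) * (((List.range d).map g).prod * g d)
        = ((List.range d).map g).prod * (g d * ((List.range d).map g).prod) * g d := by
          simp [mul_assoc]
      _ = ((-1:ℂ)^d) • (((List.range d).map g).prod * ((List.range d).map g).prod
            * (g d * g d)) := by
          rw [hcomm, Finset.prod_const, Finset.card_range]
          rw [mul_smul_comm, smul_mul_assoc]
          simp [mul_assoc]
      _ = ((-1:ℂ)^(d+1).choose 2) • 1 := by
          rw [hP, hsq d (Nat.lt_succ_self d), smul_mul_assoc, mul_one, smul_smul, ← pow_add]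
          rw [Nat.choose_succ_succ, Nat.choose_one_right, Nat.add_comm]

lemma gseTwoSwap (x1 x2 y : Matrix n n ℂ) (t1 t2 : ℂ)
    (h1 : x1 * y = t1 • (y * x1)) (h2 : x2 * y = t2 • (y * x2)) :
    (x1 * x2) * y = (t1 * t2) • (y * (x1 * x2)) := by
  rw [mul_assoc, h2, mul_smul_comm, ← mul_assoc, h1, smul_mul_assoc, smul_smul,
    mul_comm t2 t1, mul_assoc]

lemma gseFourSwap (x1 x2 y1 y2 : Matrix n n ℂ) (t11 t12 t21 t22 : ℂ)
    (h11 : x1 * y1 = t11 • (y1 * x1)) (h12 : x1 * y2 = t12 • (y2 * x1))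
    (h21 : x2 * y1 = t21 • (y1 * x2)) (h22 : x2 * y2 = t22 • (y2 * x2)) :
    (x1 * x2) * (y1 * y2) = (t11 * t12 * t21 * t22) • ((y1 * y2) * (x1 * x2)) := by
  have h1 : x1 * (y1 * y2) = (t11 * t12) • ((y1 * y2) * x1) := by
    rw [← mul_assoc, h11, smul_mul_assoc, mul_assoc, h12, mul_smul_comm, smul_smul, mul_assoc]
  have h2 : x2 * (y1 * y2) = (t21 * t22) • ((y1 * y2) * x2) := by
    rw [← mul_assoc, h21, smul_mul_assoc, mul_assoc, h22, mul_smul_comm, smul_smul, mul_assoc]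
  have := gseTwoSwap x1 x2 (y1 * y2) (t11 * t12) (t21 * t22) h1 h2
  rw [this]; ring_nf

end Helpers

lemma gseEntryIsumL (g : P1) (a b : Bool) :
    (∑ c : Bool, P1.I.entry a c * g.entry c b) = g.entry a b := by
  cases a <;> cases b <;> simp [P1.entry, Fintype.sum_bool]

lemma gseEntryIsumR (g : P1) (a b : Bool) :
    (∑ c : Bool, g.entry a c * P1.I.entry c b) = g.entry a b := by
  cases a <;> cases b <;> simp [P1.entry, Fintype.sum_bool]

lemma gsePauliMul {Q : Type*} [Fintype Q] [DecidableEq Q] (f g : Q → P1) :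
    PauliMatrix f * PauliMatrix g =
      Matrix.of fun a b => ∏ q, ∑ c : Bool, (f q).entry (a q) c * (g q).entry c (b q) := by
  ext a b
  simp only [Matrix.mul_apply, PauliMatrix, Matrix.of_apply]
  rw [Fintype.prod_sum (fun q c => (f q).entry (a q) c * (g q).entry c (b q))]
  exact Finset.sum_congr rfl fun j _ => Finset.prod_mul_distrib.symm

lemma gsePauliComm {Q : Type*} [Fintype Q] [DecidableEq Q] (f g : Q → P1)
    (h : ∀ q, f q = P1.I ∨ g q = P1.I) :
    PauliMatrix f * PauliMatrix g = PauliMatrix g * PauliMatrix f := by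
  rw [gsePauliMul, gsePauliMul]
  ext a b
  simp only [Matrix.of_apply]
  refine Finset.prod_congr rfl fun q _ => ?_
  rcases h q with hq | hq <;> rw [hq]
  · rw [gseEntryIsumL, gseEntryIsumR]
  · rw [gseEntryIsumL, gseEntryIsumR]

/-- The algebraic relations satisfied by the Generalized Superfast Encoding operators. -/
theorem stmt15 {V : Type*} [Fintype V] [DecidableEq V] (G : SimpleGraph V)
    [DecidableRel G.Adj] (hconn : G.Connected) (heven : ∀ i : V, Even (G.degree i))
    -- the labeled neighbors: `N i p` is the `p`-th neighbor of `i`, for `p < d(i)`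
    (N : V → ℕ → V)
    (hN : ∀ i p, p < G.degree i → G.Adj i (N i p))
    (hNinj : ∀ i p q, p < G.degree i → q < G.degree i → N i p = N i q → p = q)
    (hNsurj : ∀ i k, G.Adj i k → ∃ p < G.degree i, N i p = k)
    -- `pos j k` is the label of `k` among the neighbors of `j`
    (pos : V → V → ℕ)
    (hpos : ∀ j k, G.Adj j k → pos j k < G.degree j ∧ N j (pos j k) = k)
    -- the local Majorana modes `γ_{i,p}`
    (γ : V → ℕ → Matrix (GSEQubit G → Bool) (GSEQubit G → Bool) ℂ)
    (hpauli : ∀ i p, p < G.degree i → ∃ (c : ℂ) (f : GSEQubit G → P1), c ≠ 0 ∧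
      γ i p = c • PauliMatrix f ∧ ∀ q : GSEQubit G, q.1 ≠ i → f q = P1.I)
    (hherm : ∀ i p, p < G.degree i → (γ i p)ᴴ = γ i p)
    (hmaj : ∀ i p q, p < G.degree i → q < G.degree i →
      γ i p * γ i q + γ i q * γ i p = if p = q then 2 else 0)
    -- the antisymmetric orientation
    (eps : V → V → ℂ)
    (heps : ∀ j k, G.Adj j k → (eps j k = 1 ∨ eps j k = -1) ∧ eps k j = - eps j k) :
    (∀ j : V, (BtGSE G γ j)ᴴ = BtGSE G γ j) ∧
    (∀ j k, G.Adj j k → (AtGSE G γ pos eps j k)ᴴ = AtGSE G γ pos eps j k) ∧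
    (∀ j : V, BtGSE G γ j * BtGSE G γ j = 1) ∧
    (∀ j k, G.Adj j k → AtGSE G γ pos eps j k * AtGSE G γ pos eps j k = 1) ∧
    (∀ j k : V, BtGSE G γ j * BtGSE G γ k = BtGSE G γ k * BtGSE G γ j) ∧
    (∀ j k, G.Adj j k → AtGSE G γ pos eps j k = - AtGSE G γ pos eps k j) ∧
    (∀ j k l, G.Adj j k →
      AtGSE G γ pos eps j k * BtGSE G γ l =
        ((-1 : ℂ) ^ ((if j = l then 1 else 0) + (if k = l then 1 else 0))) •
          (BtGSE G γ l * AtGSE G γ pos eps j k)) ∧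
    (∀ j k l q, G.Adj j k → G.Adj l q → s(j, k) ≠ s(l, q) →
      AtGSE G γ pos eps j k * AtGSE G γ pos eps l q =
        ((-1 : ℂ) ^ ((if j = l then 1 else 0) + (if j = q then 1 else 0) +
            (if k = l then 1 else 0) + (if k = q then 1 else 0))) •
          (AtGSE G γ pos eps l q * AtGSE G γ pos eps j k)) := by

  classical
  have hsq1 : ∀ i p, p < G.degree i → γ i p * γ i p = 1 := by
    intro i p hp
    have h := hmaj i p p hp hp
    rw [if_pos rfl] at h
    have h2 : (2:ℂ) • (γ i p * γ i p)
        = (2:ℂ) • (1 : Matrix (GSEQubit G → Bool) (GSEQubit G → Bool) ℂ) := by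
      rw [two_smul, two_smul, h]
      exact one_add_one_eq_two.symm
    exact smul_right_injective _ (by norm_num : (2:ℂ) ≠ 0) h2
  have hanti : ∀ i p q, p < G.degree i → q < G.degree i → p ≠ q →
      γ i p * γ i q = -(γ i q * γ i p) := by
    intro i p q hp hq hpq
    have h := hmaj i p q hp hq
    rw [if_neg hpq] at h
    exact eq_neg_of_add_eq_zero_left h
  have hvcomm : ∀ i p i' p', i ≠ i' → p < G.degree i → p' < G.degree i' →
      γ i p * γ i' p' = γ i' p' * γ i p := by
    intro i p i' p' hne hp hp'
    obtain ⟨c, f, -, hγ, hf⟩ := hpauli i p hp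
    obtain ⟨c', f', -, hγ', hf'⟩ := hpauli i' p' hp'
    have hdisj : ∀ q : GSEQubit G, f q = P1.I ∨ f' q = P1.I := by
      intro q
      by_cases hq : q.1 = i
      · exact Or.inr (hf' q (by rw [hq]; exact hne))
      · exact Or.inl (hf q hq)
    rw [hγ, hγ', smul_mul_assoc, smul_mul_assoc, mul_smul_comm, mul_smul_comm,
      gsePauliComm f f' hdisj, smul_comm]
  have hswap : ∀ a p b r, p < G.degree a → r < G.degree b → (a = b → p ≠ r) →
      γ a p * γ b r = (if a = b then (-1:ℂ) else 1) • (γ b r * γ a p) := by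
    intro a p b r hp hr hne
    by_cases hab : a = b
    · subst hab
      rw [if_pos rfl, hanti a p r hp hr (hne rfl)]
      simp
    · rw [if_neg hab, one_smul]
      exact hvcomm a p b r hab hp hr
  have hgamB : ∀ i p l, p < G.degree i →
      γ i p * BtGSE G γ l = (if i = l then (-1:ℂ) else 1) • (BtGSE G γ l * γ i p) := by
    intro i p l hp
    have hcond : ∀ r < G.degree l, γ i p * γ l r =
        (if i = l then (if r = p then (1:ℂ) else -1) else 1) • (γ l r * γ i p) := by
      intro r hr
      by_cases hil : i = l
      · subst hil
        by_cases hrp : r = p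
        · subst hrp; simp
        · rw [if_pos rfl, if_neg hrp, hanti i p r hp hr (fun hh => hrp hh.symm)]
          simp
      · rw [if_neg hil, one_smul]
        exact hvcomm i p l r hil hp hr
    have hprod : (∏ r ∈ Finset.range (G.degree l),
        (if i = l then (if r = p then (1:ℂ) else -1) else 1)) = (if i = l then (-1:ℂ) else 1) := by
      by_cases hil : i = l
      · subst hil
        simp only [eq_self_iff_true, if_true]
        rw [← Finset.mul_prod_erase _ _ (Finset.mem_range.mpr hp),
          Finset.prod_congr rfl (fun x hx => if_neg (Finset.ne_of_mem_erase hx)),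
          Finset.prod_const, Finset.card_erase_of_mem (Finset.mem_range.mpr hp),
          Finset.card_range]
        simp only [eq_self_iff_true, if_true, one_mul]
        obtain ⟨m, hm⟩ := heven i
        have hodd : Odd (G.degree i - 1) := ⟨m - 1, by omega⟩
        exact hodd.neg_one_pow
      · simp [hil]
    unfold BtGSE
    rw [mul_smul_comm, gseListProdComm (γ i p) (γ l) _ (G.degree l) hcond, hprod,
      smul_comm, smul_mul_assoc]
  have hch : ∀ j : V, ((-1:ℂ)) ^ ((G.degree j).choose 2) = (-1) ^ (G.degree j / 2) := by
    intro j
    obtain ⟨m, hm⟩ := heven j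
    have hm2 : G.degree j / 2 = m := by omega
    rw [hm2]
    have e : (G.degree j).choose 2 = m * (2 * m - 1) := by
      rw [Nat.choose_two_right, hm, ← two_mul,
        (by ring : 2 * m * (2 * m - 1) = 2 * (m * (2 * m - 1))),
        Nat.mul_div_cancel_left _ (by norm_num)]
    rw [e]
    rcases Nat.even_or_odd m with hme | hmo
    · rw [(hme.mul_right _).neg_one_pow, hme.neg_one_pow]
    · have h2 : Odd (2 * m - 1) := by
        obtain ⟨t, ht⟩ := hmo
        exact ⟨m - 1, by omega⟩
      rw [(hmo.mul h2).neg_one_pow, hmo.neg_one_pow]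
  have hBherm : ∀ j, (BtGSE G γ j)ᴴ = BtGSE G γ j := by
    intro j
    unfold BtGSE
    rw [Matrix.conjTranspose_smul, Matrix.conjTranspose_list_prod]
    have hmap : (List.map (γ j) (List.range (G.degree j))).map conjTranspose
        = List.map (γ j) (List.range (G.degree j)) := by
      rw [List.map_map]
      exact List.map_congr_left (fun p hp => hherm j p (List.mem_range.mp hp))
    rw [hmap, gseListProdReverse (γ j) (G.degree j) (hanti j), smul_smul]
    congr 1
    rw [hch j, star_pow, star_neg, Complex.star_def, Complex.conj_I, ← mul_pow]
    congr 1
    ring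
  have hBsq : ∀ j, BtGSE G γ j * BtGSE G γ j = 1 := by
    intro j
    unfold BtGSE
    rw [smul_mul_assoc, mul_smul_comm, smul_smul,
      gseListProdSq (γ j) (G.degree j) (hanti j) (hsq1 j), hch j, smul_smul,
      ← mul_pow, ← mul_pow]
    have hs : ((-Complex.I) * (-Complex.I)) * (-1 : ℂ) = 1 := by
      rw [neg_mul_neg, Complex.I_mul_I]
      ring
    rw [hs, one_pow, one_smul]
  have hBcomm : ∀ j k : V, BtGSE G γ j * BtGSE G γ k = BtGSE G γ k * BtGSE G γ j := by
    intro j k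
    by_cases hjk : j = k
    · rw [hjk]
    · have hc : Commute (List.map (γ j) (List.range (G.degree j))).prod
          (List.map (γ k) (List.range (G.degree k))).prod := by
        apply Commute.list_prod_right
        intro x hx
        obtain ⟨q, hq, rfl⟩ := List.mem_map.mp hx
        apply Commute.list_prod_left
        intro y hy
        obtain ⟨p, hp, rfl⟩ := List.mem_map.mp hy
        exact hvcomm j p k q hjk (List.mem_range.mp hp) (List.mem_range.mp hq)
      unfold BtGSE
      rw [smul_mul_assoc, mul_smul_comm, smul_mul_assoc, mul_smul_comm, hc.eq, smul_comm]
  have hconjeps : ∀ j k, G.Adj j k → star (eps j k) = eps j k ∧ eps j k * eps j k = 1 := by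
    intro j k h
    rcases (heps j k h).1 with he | he <;> rw [he] <;> constructor <;> simp
  refine ⟨hBherm, ?_, hBsq, ?_, hBcomm, ?_, ?_, ?_⟩
  · -- A hermitian
    intro j k hadj
    have hp1 := hpos j k hadj
    have hp2 := hpos k j hadj.symm
    unfold AtGSE
    rw [Matrix.conjTranspose_smul, Matrix.conjTranspose_mul,
      hherm j _ hp1.1, hherm k _ hp2.1,
      hvcomm k _ j _ (Ne.symm hadj.ne) hp2.1 hp1.1, (hconjeps j k hadj).1]
  · -- A squared
    intro j k hadj
    have hp1 := (hpos j k hadj).1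
    have hp2 := (hpos k j hadj.symm).1
    unfold AtGSE
    rw [smul_mul_assoc, mul_smul_comm, smul_smul]
    have hXY : (γ j (pos j k) * γ k (pos k j)) * (γ j (pos j k) * γ k (pos k j)) = 1 := by
      calc (γ j (pos j k) * γ k (pos k j)) * (γ j (pos j k) * γ k (pos k j))
          = γ j (pos j k) * (γ k (pos k j) * γ j (pos j k)) * γ k (pos k j) := by
            simp [mul_assoc]
        _ = γ j (pos j k) * (γ j (pos j k) * γ k (pos k j)) * γ k (pos k j) := by
            rw [hvcomm k _ j _ (Ne.symm hadj.ne) hp2 hp1]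
        _ = (γ j (pos j k) * γ j (pos j k)) * (γ k (pos k j) * γ k (pos k j)) := by
            simp [mul_assoc]
        _ = 1 := by rw [hsq1 j _ hp1, hsq1 k _ hp2, one_mul]
    rw [hXY, (hconjeps j k hadj).2, one_smul]
  · -- A antisymmetric
    intro j k hadj
    unfold AtGSE
    rw [(heps j k hadj).2,
      hvcomm k _ j _ (Ne.symm hadj.ne) (hpos k j hadj.symm).1 (hpos j k hadj).1,
      neg_smul, neg_neg]
  · -- A B commutation
    intro j k l hadj
    have hp1 := (hpos j k hadj).1
    have hp2 := (hpos k j hadj.symm).1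
    have h1 := hgamB j (pos j k) l hp1
    have h2 := hgamB k (pos k j) l hp2
    have hts := gseTwoSwap (γ j (pos j k)) (γ k (pos k j)) (BtGSE G γ l) _ _ h1 h2
    unfold AtGSE
    simp only [smul_mul_assoc, mul_smul_comm, smul_smul]
    rw [hts, smul_smul]
    congr 1
    split_ifs <;> ring_nf
  · -- A A commutation
    intro j k l q hadj1 hadj2 hne
    have hc1 : ¬(j = l ∧ k = q) := by
      rintro ⟨rfl, rfl⟩; exact hne rfl
    have hc2 : ¬(j = q ∧ k = l) := by
      rintro ⟨rfl, rfl⟩; exact hne Sym2.eq_swap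
    have hpjk := hpos j k hadj1
    have hpkj := hpos k j hadj1.symm
    have hplq := hpos l q hadj2
    have hpql := hpos q l hadj2.symm
    have h11 := hswap j (pos j k) l (pos l q) hpjk.1 hplq.1 (by
      intro hjl hpp
      exact hc1 ⟨hjl, by rw [← hpjk.2, hpp, hjl]; exact hplq.2⟩)
    have h12 := hswap j (pos j k) q (pos q l) hpjk.1 hpql.1 (by
      intro hjq hpp
      exact hc2 ⟨hjq, by rw [← hpjk.2, hpp, hjq]; exact hpql.2⟩)
    have h21 := hswap k (pos k j) l (pos l q) hpkj.1 hplq.1 (by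
      intro hkl hpp
      exact hc2 ⟨by rw [← hpkj.2, hpp, hkl]; exact hplq.2, hkl⟩)
    have h22 := hswap k (pos k j) q (pos q l) hpkj.1 hpql.1 (by
      intro hkq hpp
      exact hc1 ⟨by rw [← hpkj.2, hpp, hkq]; exact hpql.2, hkq⟩)
    have hfour := gseFourSwap (γ j (pos j k)) (γ k (pos k j)) (γ l (pos l q)) (γ q (pos q l))
      _ _ _ _ h11 h12 h21 h22
    unfold AtGSE
    simp only [smul_mul_assoc, mul_smul_comm, smul_smul]
    rw [hfour, smul_smul]
    congr 1
    split_ifs <;> ring_nf
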